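/- Let D be a self-adjoint operator on a finite-dimensional complex inner product space H with a self-adjoint involution ε anticommuting with D. Write H = H⁺ ⊕ H⁻ for the eigenspaces of ε and D± = D|_{H±}: H± → H∓. Then for all t > 0, the supertrace str(exp(-tD²)) := tr(ε · exp(-tD²)) equals dim ker D⁺ - dim ker D⁻, independently of t. -/

import Mathlib

/-!
The heat operator `exp(-tD²)` commutes with `D`, so both `ε` and `X = ε exp(-tD²)` anticommute
with `D`. For self-adjoint `D` the space splits as `ker D ⊕ range D`, and `X` preserves both
summands. On `range D` the operator `D` is invertible and conjugation by it sends `X` to `-X`, so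
`X` is traceless there. On `ker D` the heat operator is the identity, so only the trace of the
involution `ε` on `ker D` remains; writing `ε = π₊ - π₋` with the eigenprojections
`π± = (1 ± ε)/2` gives `dim (ker D ∩ H⁺) - dim (ker D ∩ H⁻)`.
-/

open ContinuousLinearMap Module

namespace LinearMap

section Field

variable {K V : Type*} [Field K] [AddCommGroup V] [Module K V]

theorem mapsTo_ker_of_mul_eq_neg_mul {d x : Module.End K V} (h : d * x = -(x * d)) :
    ∀ v ∈ ker d, x v ∈ ker d := fun v hv ↦ by
  simpa [mem_ker.mp hv] using congr($h v)

theorem mapsTo_range_of_mul_eq_neg_mul {d x : Module.End K V} (h : d * x = -(x * d)) :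
    ∀ v ∈ range d, x v ∈ range d := by
  rintro _ ⟨v, rfl⟩
  exact ⟨-x v, by simpa [neg_eq_iff_eq_neg] using congr($h v)⟩

theorem finrank_ker_restrict (f : Module.End K V) {p : Submodule K V} (hf : ∀ v ∈ p, f v ∈ p) :
    finrank K (ker (f.restrict hf)) = finrank K ↥(p ⊓ ker f) := by
  rw [ker_restrict, ← Submodule.map_comap_subtype, Submodule.finrank_map_subtype_eq]

variable [NeZero (2 : K)]

theorem trace_eq_zero_of_mul_eq_neg_mul_of_isUnit {d x : Module.End K V}
    (h : d * x = -(x * d)) (hd : IsUnit d) : trace K V x = 0 := by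
  have hconj : hd.unit * x * ↑hd.unit⁻¹ = -x := by
    rw [IsUnit.unit_spec, h, neg_mul, mul_assoc, hd.mul_val_inv, mul_one]
  have := trace_conj (R := K) (M := V) x hd.unit
  rw [hconj, map_neg, neg_eq_iff_add_eq_zero, ← two_mul] at this
  exact (mul_eq_zero.mp this).resolve_left two_ne_zero

theorem isProj_ker_sub_id_of_mul_self_eq_one {e : Module.End K V} (he : e * e = 1) :
    IsProj (ker (e - id)) ((2⁻¹ : K) • (1 + e)) where
  map_mem v := by
    have : e (e v) = v := congr($he v)
    simp [this, add_comm]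
  map_id v hv := by
    have : e v = v := sub_eq_zero.mp hv
    rw [smul_apply, add_apply, this, Module.End.one_apply, ← two_smul K v, smul_smul,
      inv_mul_cancel₀ two_ne_zero, one_smul]

variable [FiniteDimensional K V]

theorem trace_eq_finrank_sub_finrank_of_mul_self_eq_one {e : Module.End K V} (he : e * e = 1) :
    trace K V e = finrank K (ker (e - id)) - finrank K (ker (e + id)) := by
  have hneg : -e * -e = 1 := by rw [neg_mul_neg, he]
  have hdecomp : e = (2⁻¹ : K) • (1 + e) - (2⁻¹ : K) • (1 + -e) := by
    rw [← smul_sub, add_sub_add_left_eq_sub, sub_neg_eq_add, ← two_smul K, smul_smul,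
      inv_mul_cancel₀ two_ne_zero, one_smul]
  rw [congrArg (trace K V) hdecomp, map_sub, (isProj_ker_sub_id_of_mul_self_eq_one he).trace,
    (isProj_ker_sub_id_of_mul_self_eq_one hneg).trace, ← neg_add', ker_neg]

theorem trace_restrict_eq_finrank_sub_finrank_of_mul_self_eq_one {e : Module.End K V}
    (he : e * e = 1) {p : Submodule K V} (hp : ∀ v ∈ p, e v ∈ p) :
    trace K p (e.restrict hp) =
      finrank K ↥(p ⊓ ker (e - id)) - finrank K ↥(p ⊓ ker (e + id)) := by
  have he' : e.restrict hp * e.restrict hp = 1 := by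
    ext v
    exact congr($he v)
  have hsub : e.restrict hp - id = (e - id).restrict fun v hv ↦ p.sub_mem (hp v hv) hv := by
    ext; simp
  have hadd : e.restrict hp + id = (e + id).restrict fun v hv ↦ p.add_mem (hp v hv) hv := by
    ext; simp
  rw [trace_eq_finrank_sub_finrank_of_mul_self_eq_one he', hsub, hadd, finrank_ker_restrict,
    finrank_ker_restrict]

theorem trace_eq_trace_restrict_ker_of_mul_eq_neg_mul {d x : Module.End K V}
    (hd : IsCompl (ker d) (range d)) (h : d * x = -(x * d)) :
    trace K V x = trace K (ker d) (x.restrict (mapsTo_ker_of_mul_eq_neg_mul h)) := by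
  have hint : DirectSum.IsInternal (fun b : Bool ↦ cond b (ker d) (range d)) := by
    rw [DirectSum.isInternal_submodule_iff_isCompl _ (i := true) (j := false) (by simp) ?_]
    · exact hd
    · ext b; cases b <;> simp
  have hmaps : ∀ b, Set.MapsTo x (cond b (ker d) (range d) : Submodule K V)
      (cond b (ker d) (range d) : Submodule K V) := by
    rintro (_ | _)
    exacts [mapsTo_range_of_mul_eq_neg_mul h, mapsTo_ker_of_mul_eq_neg_mul h]
  have hdR : ∀ v ∈ range d, d v ∈ range d := fun _ _ ↦ mem_range_self d _
  have hunit : IsUnit (d.restrict hdR) := by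
    rw [isUnit_iff_ker_eq_bot, ker_restrict, ← Submodule.disjoint_iff_comap_eq_bot]
    exact hd.disjoint.symm
  have hrange : trace K (range d) (x.restrict (hmaps false)) = 0 := by
    refine trace_eq_zero_of_mul_eq_neg_mul_of_isUnit ?_ hunit
    ext v
    exact congr($h v)
  rw [trace_eq_sum_trace_restrict hint hmaps, Fintype.sum_bool]
  exact add_eq_left.mpr hrange

end Field

theorem IsSymmetric.isCompl_ker_range {𝕜 E : Type*} [RCLike 𝕜] [NormedAddCommGroup E]
    [InnerProductSpace 𝕜 E] [FiniteDimensional 𝕜 E] {T : E →ₗ[𝕜] E} (hT : T.IsSymmetric) :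
    IsCompl (ker T) (range T) :=
  hT.orthogonal_range ▸ (range T).isCompl_orthogonal.symm

end LinearMap

theorem ContinuousLinearMap.exp_apply_of_apply_eq_zero {𝕜 E : Type*} [RCLike 𝕜]
    [NormedAddCommGroup E] [NormedSpace 𝕜 E] [CompleteSpace E] {A : E →L[𝕜] E} {v : E}
    (hv : A v = 0) : NormedSpace.exp A v = v := by
  have hsum := (NormedSpace.exp_series_hasSum_exp' (𝕂 := 𝕜) A).mapL (apply 𝕜 E v)
  refine hsum.unique ?_
  convert hasSum_single (f := fun n ↦ apply 𝕜 E v ((n.factorial⁻¹ : 𝕜) • A ^ n)) 0 ?_ using 1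
  · simp
  · intro n hn
    obtain ⟨m, rfl⟩ := Nat.exists_eq_succ_of_ne_zero hn
    simp [pow_succ, hv]

theorem mckean_singer_general
    {H : Type*} [NormedAddCommGroup H] [InnerProductSpace ℂ H] [FiniteDimensional ℂ H]
    (D : H →L[ℂ] H) (hD : IsSelfAdjoint D)
    (ε : H →L[ℂ] H) (hε2 : ε ∘L ε = 1)
    (hanti : D ∘L ε = -(ε ∘L D)) :
    ∀ t : ℝ, 0 < t →
      LinearMap.trace ℂ H ((ε ∘L NormedSpace.exp (-(t : ℂ) • (D ∘L D))) : H →ₗ[ℂ] H)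
        = (Module.finrank ℂ
            ((LinearMap.ker (D : H →ₗ[ℂ] H) ⊓ LinearMap.ker ((ε : H →ₗ[ℂ] H) - LinearMap.id) : Submodule ℂ H)) : ℂ)
          - (Module.finrank ℂ
            ((LinearMap.ker (D : H →ₗ[ℂ] H) ⊓ LinearMap.ker ((ε : H →ₗ[ℂ] H) + LinearMap.id) : Submodule ℂ H)) : ℂ) := by
  intro t _
  set heat := NormedSpace.exp (-(t : ℂ) • (D ∘L D))
  have hDheat : Commute D heat :=
    (((Commute.refl D).mul_right (Commute.refl D)).smul_right _).exp_right
  have hDε : (D : H →ₗ[ℂ] H) * ε = -(ε * D) := congrArg toLinearMap hanti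
  have hDX : (D : H →ₗ[ℂ] H) * (ε ∘L heat : H →L[ℂ] H) = -((ε ∘L heat : H →L[ℂ] H) * D) := by
    have : D * (ε * heat) = -((ε * heat) * D) := by
      rw [← mul_assoc, show D * ε = -(ε * D) from hanti, neg_mul, mul_assoc, hDheat.eq, mul_assoc]
    exact congrArg toLinearMap this
  have hε2' : (ε : H →ₗ[ℂ] H) * ε = 1 := congrArg toLinearMap hε2
  rw [LinearMap.trace_eq_trace_restrict_ker_of_mul_eq_neg_mul hD.isSymmetric.isCompl_ker_range hDX,
    ← LinearMap.trace_restrict_eq_finrank_sub_finrank_of_mul_self_eq_one hε2'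
      (LinearMap.mapsTo_ker_of_mul_eq_neg_mul hDε)]
  congr 1
  ext v
  have hv : (-(t : ℂ) • (D ∘L D)) v = 0 := by simp
  exact congrArg ε (ContinuousLinearMap.exp_apply_of_apply_eq_zero hv)

/-- Finite-dimensional McKean–Singer identity: the supertrace of the heat semigroup
equals `dim ker D⁺ - dim ker D⁻`, where `ker D± = ker D ∩ H±`. -/
theorem mckean_singer
    {H : Type*} [NormedAddCommGroup H] [InnerProductSpace ℂ H] [FiniteDimensional ℂ H]
    (D : H →L[ℂ] H) (hD : IsSelfAdjoint D)
    (ε : H →L[ℂ] H) (hε2 : ε ∘L ε = 1) (hεsa : adjoint ε = ε)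
    (hanti : D ∘L ε = -(ε ∘L D)) :
    ∀ t : ℝ, 0 < t →
      LinearMap.trace ℂ H ((ε ∘L NormedSpace.exp (-(t : ℂ) • (D ∘L D))) : H →ₗ[ℂ] H)
        = (Module.finrank ℂ
            ((LinearMap.ker (D : H →ₗ[ℂ] H) ⊓ LinearMap.ker ((ε : H →ₗ[ℂ] H) - LinearMap.id) : Submodule ℂ H)) : ℂ)
          - (Module.finrank ℂ
            ((LinearMap.ker (D : H →ₗ[ℂ] H) ⊓ LinearMap.ker ((ε : H →ₗ[ℂ] H) + LinearMap.id) : Submodule ℂ H)) : ℂ) :=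
  mckean_singer_general D hD ε hε2 hanti
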